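/- Let (G, L) be a rational structure and H ≤ G a subgroup. If H is L-quasi-convex with constant k, then H is generated by the set { h ∈ H : |h| ≤ 2k+1 }; in particular every L-quasi-convex subgroup of G is finitely generated. -/

import Mathlib

/-!
Write `h ∈ H` as `μ(w)` with `w ∈ L`. Quasi-convexity picks for each prefix `uᵢ` of `w` some
`hᵢ ∈ H` with `|hᵢ⁻¹ μ(uᵢ)| ≤ k`, where one may take `h₀ = 1` and `hₙ = h`. Consecutive prefixes
differ by one letter, so `hᵢ⁻¹ hᵢ₊₁ ∈ H` has length at most `2k+1`, and `h` is the product of these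
elements. Only finitely many elements have bounded length, since `A` is finite.
-/

open List

/-- A word over the alphabet Ã = A ∪ A⁻¹ is a `List (A × Bool)`: the letter `(a, true)`
stands for `a` and `(a, false)` for the formal inverse `a⁻¹`. A word is *reduced* if it
has no factor `a·a⁻¹` or `a⁻¹·a`. -/
def Reduced {A : Type*} (w : List (A × Bool)) : Prop :=
  w.Chain' fun p q => ¬(p.1 = q.1 ∧ q.2 = !p.2)

variable {A : Type*} [Fintype A] {G : Type*} [Group G]

/-- Evaluation in `G` of a word over Ã, determined by the images `f a` of the letters.
This is the (inverse-respecting) monoid homomorphism μ : Ã* → G. -/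
def eval (f : A → G) (w : List (A × Bool)) : G :=
  (w.map fun p => if p.2 then f p.1 else (f p.1)⁻¹).prod

/-- Word length of `g ∈ G` with respect to the generators `A`:
the least length of a word over Ã mapping onto `g`. -/
noncomputable def wlen (f : A → G) (g : G) : ℕ :=
  sInf {n | ∃ w : List (A × Bool), eval f w = g ∧ w.length = n}

/-- A rational structure: `L` is a regular language of reduced words with μ(L) = G. -/
def RationalStructure (f : A → G) (L : Set (List (A × Bool))) : Prop :=
  Language.IsRegular (L : Language (A × Bool)) ∧ (∀ w ∈ L, Reduced w) ∧
    ∀ g : G, ∃ w ∈ L, eval f w = g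

/-- `H` is L-quasi-convex with constant `k`: for every `w ∈ L` with `μ(w) ∈ H` and
every prefix `u` of `w`, there is `h ∈ H` with `|h⁻¹ μ(u)| ≤ k`. -/
def QCW (f : A → G) (L : Set (List (A × Bool))) (H : Subgroup G) (k : ℕ) : Prop :=
  ∀ w ∈ L, eval f w ∈ H → ∀ u, u <+: w → ∃ h ∈ H, wlen f (h⁻¹ * eval f u) ≤ k

/-- The set of right cosets `H·μ(u)` where `u` ranges over prefixes of words
`w ∈ L` with `μ(w) ∈ H` (the vertex set of the Stallings graph Γ_L(H)). -/
def VL (f : A → G) (L : Set (List (A × Bool))) (H : Subgroup G) : Set (Set G) :=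
  {S | ∃ w ∈ L, eval f w ∈ H ∧ ∃ u, u <+: w ∧ S = {x | ∃ h ∈ H, x = h * eval f u}}

section WordLength

omit [Fintype A]

lemma eval_append (f : A → G) (u v : List (A × Bool)) :
    eval f (u ++ v) = eval f u * eval f v := by
  simp [eval]

lemma eval_reverse_map_not (f : A → G) (w : List (A × Bool)) :
    eval f (w.reverse.map fun p => (p.1, !p.2)) = (eval f w)⁻¹ := by
  induction w with
  | nil => simp [eval]
  | cons p t ih =>
    obtain ⟨a, b⟩ := p
    rw [List.reverse_cons, List.map_append, eval_append, ih, ← List.singleton_append (l := t),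
      eval_append, mul_inv_rev]
    cases b <;> simp [eval]

lemma wlen_eval_le_length (f : A → G) (w : List (A × Bool)) : wlen f (eval f w) ≤ w.length :=
  Nat.sInf_le ⟨w, rfl, rfl⟩

lemma wlen_one (f : A → G) : wlen f 1 = 0 :=
  Nat.le_zero.mp (wlen_eval_le_length f [])

variable {f : A → G} (hsurj : Function.Surjective (eval f))
include hsurj

lemma exists_eval_eq_length_eq_wlen (g : G) :
    ∃ w : List (A × Bool), eval f w = g ∧ w.length = wlen f g := by
  obtain ⟨w, hw⟩ := hsurj g
  exact Nat.sInf_mem (s := {n | ∃ w : List (A × Bool), eval f w = g ∧ w.length = n})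
    ⟨w.length, w, hw, rfl⟩

lemma wlen_mul_le (g₁ g₂ : G) : wlen f (g₁ * g₂) ≤ wlen f g₁ + wlen f g₂ := by
  obtain ⟨w₁, rfl, hl₁⟩ := exists_eval_eq_length_eq_wlen hsurj g₁
  obtain ⟨w₂, rfl, hl₂⟩ := exists_eval_eq_length_eq_wlen hsurj g₂
  rw [← eval_append, ← hl₁, ← hl₂, ← List.length_append]
  exact wlen_eval_le_length f _

lemma wlen_inv_le (g : G) : wlen f g⁻¹ ≤ wlen f g := by
  obtain ⟨w, rfl, hl⟩ := exists_eval_eq_length_eq_wlen hsurj g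
  rw [← eval_reverse_map_not, ← hl]
  simpa using wlen_eval_le_length f (w.reverse.map fun p => (p.1, !p.2))

lemma wlen_inv (g : G) : wlen f g⁻¹ = wlen f g :=
  (wlen_inv_le hsurj g).antisymm (by simpa using wlen_inv_le hsurj g⁻¹)

lemma wlen_inv_mul_le_add (x y z : G) :
    wlen f (x⁻¹ * z) ≤ wlen f (x⁻¹ * y) + wlen f (y⁻¹ * z) := by
  simpa [mul_assoc] using wlen_mul_le hsurj (x⁻¹ * y) (y⁻¹ * z)

end WordLength

lemma finite_setOf_wlen_le {f : A → G} (hsurj : Function.Surjective (eval f)) (n : ℕ) :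
    {g : G | wlen f g ≤ n}.Finite := by
  refine ((List.finite_length_le _ n).image (eval f)).subset fun g hg => ?_
  obtain ⟨w, hw, hl⟩ := exists_eval_eq_length_eq_wlen hsurj g
  exact ⟨w, hl.trans_le hg, hw⟩

section QuasiConvex

omit [Fintype A]

variable {f : A → G} (hsurj : Function.Surjective (eval f)) {H : Subgroup G} {k : ℕ}
include hsurj

lemma wlen_inv_mul_le_of_near_append_singleton {u : List (A × Bool)} {p : A × Bool} {h₁ h₂ : G}
    (h₁u : wlen f (h₁⁻¹ * eval f u) ≤ k) (h₂up : wlen f (h₂⁻¹ * eval f (u ++ [p])) ≤ k) :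
    wlen f (h₁⁻¹ * h₂) ≤ 2 * k + 1 := by
  have hletter : wlen f ((eval f u)⁻¹ * eval f (u ++ [p])) ≤ 1 := by
    simpa [eval_append] using wlen_eval_le_length f [p]
  have hback : wlen f ((eval f (u ++ [p]))⁻¹ * h₂) ≤ k := by
    rwa [← wlen_inv hsurj, mul_inv_rev, inv_inv]
  calc wlen f (h₁⁻¹ * h₂)
      ≤ wlen f (h₁⁻¹ * eval f u) + wlen f ((eval f u)⁻¹ * eval f (u ++ [p]))
        + wlen f ((eval f (u ++ [p]))⁻¹ * h₂) := by
        refine (wlen_inv_mul_le_add hsurj _ (eval f (u ++ [p])) _).trans ?_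
        gcongr
        simpa using wlen_inv_mul_le_add hsurj h₁ (eval f u) (eval f (u ++ [p]))
    _ ≤ 2 * k + 1 := by omega

lemma mem_closure_of_forall_prefix_near {w : List (A × Bool)}
    (hw : ∀ u, u <+: w → ∃ h ∈ H, wlen f (h⁻¹ * eval f u) ≤ k) :
    ∀ u, u <+: w → ∀ h ∈ H, wlen f (h⁻¹ * eval f u) ≤ k →
      h ∈ Subgroup.closure {g : G | g ∈ H ∧ wlen f g ≤ 2 * k + 1} := by
  intro u
  induction u using List.reverseRecOn with
  | nil =>
    intro _ h hH hlen
    refine Subgroup.subset_closure ⟨hH, ?_⟩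
    have : wlen f h ≤ k := by simpa [eval, wlen_inv hsurj] using hlen
    omega
  | append_singleton u p ih =>
    intro hup h hH hlen
    have hu : u <+: w := (u.prefix_append [p]).trans hup
    obtain ⟨h', hH', hlen'⟩ := hw u hu
    rw [← mul_inv_cancel_left h' h]
    exact mul_mem (ih hu h' hH' hlen') (Subgroup.subset_closure
      ⟨H.mul_mem (H.inv_mem hH') hH, wlen_inv_mul_le_of_near_append_singleton hsurj hlen' hlen⟩)

end QuasiConvex

omit [Fintype A] in
lemma closure_wlen_le_eq_of_QCW {f : A → G} {L : Set (List (A × Bool))} {H : Subgroup G} {k : ℕ}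
    (hL : ∀ g : G, ∃ w ∈ L, eval f w = g) (hqc : QCW f L H k) :
    Subgroup.closure {g : G | g ∈ H ∧ wlen f g ≤ 2 * k + 1} = H := by
  have hsurj : Function.Surjective (eval f) := fun g => (hL g).imp fun _ hw => hw.2
  refine le_antisymm ((Subgroup.closure_le H).2 fun g hg => hg.1) fun h hh => ?_
  obtain ⟨w, hwL, rfl⟩ := hL h
  refine mem_closure_of_forall_prefix_near hsurj (hqc w hwL hh) w w.prefix_refl _ hh ?_
  simp [wlen_one]

/-- if H is L-quasi-convex with constant k then H is generated by its
elements of word length at most 2k+1; in particular H is finitely generated. -/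
theorem stmt4 (f : A → G) (L : Set (List (A × Bool))) (H : Subgroup G)
    (hL : RationalStructure f L) (k : ℕ) (hqc : QCW f L H k) :
    Subgroup.closure {g : G | g ∈ H ∧ wlen f g ≤ 2 * k + 1} = H ∧ H.FG := by
  have hsurj : Function.Surjective (eval f) := fun g =>
    (hL.2.2 g).imp fun _ hw => hw.2
  have hclosure := closure_wlen_le_eq_of_QCW hL.2.2 hqc
  refine ⟨hclosure, (H.fg_iff).2 ⟨_, hclosure, ?_⟩⟩
  exact (finite_setOf_wlen_le hsurj (2 * k + 1)).subset fun g hg => hg.2
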